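/- arXiv:1810.02024 — 6 statements merged into one kernel-verified Lean document; each statement's English description precedes it below -/
import Mathlib

section
/- Let f : ℝⁿ → ℝ be twice continuously differentiable and let F ⊆ ℝⁿ be a nonempty closed convex set. Then the first-order stationarity measure X(x) = |min { ⟨∇f(x), s⟩ : x + s ∈ F, ‖s‖ ≤ 1 }| is a continuous function of x on F. -/
open scoped RealInnerProductSpace

/-- First-order stationarity measure
`X(x) = |min { ⟨∇f(x), s⟩ : x + s ∈ F, ‖s‖ ≤ 1 }|`. -/
noncomputable def Xmeas {n : ℕ} (f : EuclideanSpace ℝ (Fin n) → ℝ)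
    (F : Set (EuclideanSpace ℝ (Fin n))) (x : EuclideanSpace ℝ (Fin n)) : ℝ :=
  |sInf {v : ℝ | ∃ s : EuclideanSpace ℝ (Fin n),
      x + s ∈ F ∧ ‖s‖ ≤ 1 ∧ v = ⟪gradient f x, s⟫}|

/-!
Write `m(g, x) = inf {⟪g, s⟫ : x + s ∈ F, ‖s‖ ≤ 1}`, so that `X(x) = |m(∇f x, x)|`.
The map `g ↦ m(g, x)` is `1`-Lipschitz, since all admissible steps have norm at most `1`.
In `x` it is locally Lipschitz: by convexity, an admissible step `s` at `y` can be moved to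
the admissible step `s' = (y + s - x) / (1 + ‖x - y‖)` at `x`, with `‖s' - s‖ ≤ 2 ‖x - y‖`.
Hence `|m(g, x) - m(g₀, x₀)| ≤ ‖g - g₀‖ + 2 ‖g₀‖ ‖x - x₀‖`, and continuity of `∇f` finishes.
-/

section StepInf

variable {E : Type*} [NormedAddCommGroup E] [InnerProductSpace ℝ E]

noncomputable def stepInf (F : Set E) (x g : E) : ℝ :=
  sInf {v : ℝ | ∃ s : E, x + s ∈ F ∧ ‖s‖ ≤ 1 ∧ v = ⟪g, s⟫}

variable {F : Set E} {x y g g' s : E}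

lemma stepInf_le_inner (hs : x + s ∈ F) (hs1 : ‖s‖ ≤ 1) : stepInf F x g ≤ ⟪g, s⟫ := by
  refine csInf_le ⟨-‖g‖, ?_⟩ ⟨s, hs, hs1, rfl⟩
  rintro _ ⟨t, -, ht1, rfl⟩
  have := (abs_le.mp (abs_real_inner_le_norm g t)).1
  nlinarith [norm_nonneg g]

lemma le_stepInf {c : ℝ} (hx : x ∈ F) (h : ∀ s, x + s ∈ F → ‖s‖ ≤ 1 → c ≤ ⟪g, s⟫) :
    c ≤ stepInf F x g :=
  le_csInf ⟨0, 0, by simpa using hx⟩ fun _ ⟨s, hs, hs1, hv⟩ => hv ▸ h s hs hs1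

lemma stepInf_le_add_norm_sub (hx : x ∈ F) :
    stepInf F x g ≤ stepInf F x g' + ‖g - g'‖ := by
  rw [← sub_le_iff_le_add]
  refine le_stepInf hx fun s hs hs1 => ?_
  have hdiff : ⟪g - g', s⟫ ≤ ‖g - g'‖ := by
    nlinarith [real_inner_le_norm (g - g') s, norm_nonneg (g - g')]
  have := stepInf_le_inner (g := g) hs hs1
  rw [inner_sub_left] at hdiff
  linarith

lemma Convex.exists_step_near (hF : Convex ℝ F) (hx : x ∈ F) (hs : y + s ∈ F)
    (hs1 : ‖s‖ ≤ 1) : ∃ s', x + s' ∈ F ∧ ‖s'‖ ≤ 1 ∧ ‖s' - s‖ ≤ 2 * ‖x - y‖ := by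
  set d := ‖x - y‖
  have hd : 0 ≤ d := norm_nonneg _
  set t : ℝ := (1 + d)⁻¹
  have ht : 0 ≤ t := by positivity
  have htd : t * (1 + d) = 1 := inv_mul_cancel₀ (by positivity)
  have hreach : ‖y + s - x‖ ≤ 1 + d := by
    calc ‖y + s - x‖ = ‖s - (x - y)‖ := by congr 1; abel
      _ ≤ ‖s‖ + d := norm_sub_le _ _
      _ ≤ 1 + d := by linarith
  refine ⟨t • (y + s - x), ?_, ?_, ?_⟩
  · have hseg := hF hx hs (by nlinarith : 0 ≤ 1 - t) ht (by ring)
    convert hseg using 1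
    module
  · rw [norm_smul, Real.norm_of_nonneg ht]
    nlinarith
  · calc ‖t • (y + s - x) - s‖ = ‖(1 - t) • s + t • (x - y)‖ := by
          rw [← norm_neg]; congr 1; module
      _ ≤ (1 - t) * ‖s‖ + t * d := by
          refine (norm_add_le _ _).trans_eq ?_
          rw [norm_smul, norm_smul, Real.norm_of_nonneg ht,
            Real.norm_of_nonneg (by nlinarith : 0 ≤ 1 - t)]
      _ ≤ 2 * d := by nlinarith

lemma stepInf_le_add_norm_mul (hF : Convex ℝ F) (hx : x ∈ F) (hy : y ∈ F) :
    stepInf F x g ≤ stepInf F y g + 2 * ‖g‖ * ‖x - y‖ := by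
  rw [← sub_le_iff_le_add]
  refine le_stepInf hy fun s hs hs1 => ?_
  obtain ⟨s', hs', hs'1, hnear⟩ := hF.exists_step_near hx hs hs1
  have hmove : ⟪g, s' - s⟫ ≤ 2 * ‖g‖ * ‖x - y‖ := by
    nlinarith [real_inner_le_norm g (s' - s), norm_nonneg g]
  have := stepInf_le_inner (g := g) hs' hs'1
  rw [inner_sub_right] at hmove
  linarith

lemma abs_stepInf_sub_le (hF : Convex ℝ F) (hx : x ∈ F) (hy : y ∈ F) :
    |stepInf F x g - stepInf F y g'| ≤ ‖g - g'‖ + 2 * ‖g'‖ * ‖x - y‖ := by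
  have h₁ := stepInf_le_add_norm_sub (g := g) (g' := g') hx
  have h₂ := stepInf_le_add_norm_sub (g := g') (g' := g) hx
  have h₃ := stepInf_le_add_norm_mul (g := g') hF hx hy
  have h₄ := stepInf_le_add_norm_mul (g := g') hF hy hx
  rw [norm_sub_rev g'] at h₂
  rw [norm_sub_rev y] at h₄
  rw [abs_sub_le_iff]
  constructor <;> linarith

lemma ContinuousOn.stepInf_apply {G : E → E} (hF : Convex ℝ F) (hG : ContinuousOn G F) :
    ContinuousOn (fun x => stepInf F x (G x)) F := by
  intro x₀ hx₀
  have hGx₀ := tendsto_iff_norm_sub_tendsto_zero.mp (hG x₀ hx₀)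
  have hx : Filter.Tendsto (fun x => ‖x - x₀‖) (nhdsWithin x₀ F) (nhds 0) :=
    tendsto_iff_norm_sub_tendsto_zero.mp continuousWithinAt_id
  refine tendsto_iff_dist_tendsto_zero.mpr (squeeze_zero' (.of_forall fun _ => dist_nonneg)
    (eventually_nhdsWithin_of_forall fun x hx => abs_stepInf_sub_le hF hx hx₀) ?_)
  simpa using hGx₀.add (hx.const_mul (2 * ‖G x₀‖))

end StepInf

theorem stmt_0_general {n : ℕ} (f : EuclideanSpace ℝ (Fin n) → ℝ) (hf : ContDiff ℝ 2 f)
    (F : Set (EuclideanSpace ℝ (Fin n)))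
    (hFconv : Convex ℝ F) :
    ContinuousOn (Xmeas f F) F := by
  have hgrad : Continuous (gradient f) :=
    (InnerProductSpace.toDual ℝ _).symm.continuous.comp (hf.continuous_fderiv (by norm_num))
  exact continuous_abs.comp_continuousOn (hgrad.continuousOn.stepInf_apply hFconv)

theorem stmt_0 {n : ℕ} (f : EuclideanSpace ℝ (Fin n) → ℝ) (hf : ContDiff ℝ 2 f)
    (F : Set (EuclideanSpace ℝ (Fin n))) (hFne : F.Nonempty) (hFcl : IsClosed F)
    (hFconv : Convex ℝ F) :
    ContinuousOn (Xmeas f F) F :=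
  stmt_0_general f hf F hFconv
end

section
/- Let f : ℝⁿ → ℝ be twice continuously differentiable, F ⊆ ℝⁿ nonempty closed convex, and x̄ ∈ F. Then X(x̄) = 0 and ψ(x̄) = 0 if and only if x̄ is a second-order stationary point of min_{x ∈ F} f(x), i.e., ⟨∇f(x̄), x − x̄⟩ ≥ 0 for all x ∈ F, and dᵀ∇²f(x̄)d ≥ 0 for every d with ⟨∇f(x̄), d⟩ = 0 and x̄ + d ∈ F. -/
open scoped RealInnerProductSpace

/-- Second-order stationarity measure
`ψ(x) = |min { dᵀ∇²f(x)d : x + d ∈ F, ‖d‖ ≤ 1, ⟨∇f(x), d⟩ ≤ 0 }|`. -/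
noncomputable def psiMeas {n : ℕ} (f : EuclideanSpace ℝ (Fin n) → ℝ)
    (F : Set (EuclideanSpace ℝ (Fin n))) (x : EuclideanSpace ℝ (Fin n)) : ℝ :=
  |sInf {v : ℝ | ∃ d : EuclideanSpace ℝ (Fin n),
      x + d ∈ F ∧ ‖d‖ ≤ 1 ∧ ⟪gradient f x, d⟫ ≤ 0 ∧
        v = iteratedFDeriv ℝ 2 f x ![d, d]}|

/-!
Both measures are absolute values of infima over sets that contain `0` (take the direction
`d = 0`), so each vanishes iff its objective is nonnegative on the feasible directions of norm
at most one. The objectives `⟨∇f(x̄), d⟩` and `dᵀ∇²f(x̄)d` are positively homogeneous, and by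
convexity of `F` every feasible direction can be shrunk into the unit ball while staying
feasible, so the norm bound can be dropped. Finally, under first-order stationarity every
feasible direction has `⟨∇f(x̄), d⟩ ≥ 0`, so the constraint `⟨∇f(x̄), d⟩ ≤ 0` in `ψ` amounts to
`⟨∇f(x̄), d⟩ = 0`.
-/

lemma abs_sInf_eq_zero_iff {S : Set ℝ} (hS : BddBelow S) (h0 : 0 ∈ S) :
    |sInf S| = 0 ↔ ∀ v ∈ S, 0 ≤ v := by
  rw [abs_eq_zero]
  refine ⟨fun h v hv => h ▸ csInf_le hS hv, fun h => ?_⟩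
  exact le_antisymm (csInf_le hS h0) (le_csInf ⟨0, h0⟩ h)

lemma ContinuousMultilinearMap.map_smul_smul_two {𝕜 E G : Type*} [NontriviallyNormedField 𝕜]
    [NormedAddCommGroup E] [NormedSpace 𝕜 E] [NormedAddCommGroup G] [NormedSpace 𝕜 G]
    (A : ContinuousMultilinearMap 𝕜 (fun _ : Fin 2 => E) G) (t : 𝕜) (d : E) :
    A ![t • d, t • d] = (t * t) • A ![d, d] := by
  have h : ![t • d, t • d] = fun i => (fun _ : Fin 2 => t) i • ![d, d] i := by
    funext i; fin_cases i <;> rfl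
  rw [h, A.map_smul_univ, Fin.prod_univ_two]

lemma Convex.forall_add_mem_of_norm_le_one_iff {E : Type*} [SeminormedAddCommGroup E]
    [NormedSpace ℝ E] {F : Set E} (hF : Convex ℝ F) {x : E} (hx : x ∈ F) {P : E → Prop}
    (hP : ∀ d, ∀ t : ℝ, 0 < t → P (t • d) → P d) :
    (∀ d, x + d ∈ F → ‖d‖ ≤ 1 → P d) ↔ ∀ d, x + d ∈ F → P d := by
  refine ⟨fun h d hd => ?_, fun h d hd _ => h d hd⟩
  have hpos : 0 < 1 + ‖d‖ := by positivity
  set t := (1 + ‖d‖)⁻¹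
  have ht : 0 < t := inv_pos.mpr hpos
  refine hP d t ht (h _ (hF.add_smul_mem hx hd ⟨ht.le, inv_le_one_of_one_le₀ ?_⟩) ?_)
  · linarith [norm_nonneg d]
  · rw [norm_smul, Real.norm_of_nonneg ht.le, inv_mul_le_iff₀ hpos]
    linarith

lemma bddBelow_of_subset_image_closedBall {E : Type*} [SeminormedAddCommGroup E] [ProperSpace E]
    {φ : E → ℝ} (hφ : Continuous φ) {S : Set ℝ} (hS : S ⊆ φ '' Metric.closedBall 0 1) :
    BddBelow S :=
  ((isCompact_closedBall 0 1).bddBelow_image hφ.continuousOn).mono hS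

section Measures

variable {n : ℕ} {f : EuclideanSpace ℝ (Fin n) → ℝ} {F : Set (EuclideanSpace ℝ (Fin n))}
  {x : EuclideanSpace ℝ (Fin n)}

lemma Xmeas_eq_zero_iff (hx : x ∈ F) :
    Xmeas f F x = 0 ↔ ∀ s, x + s ∈ F → ‖s‖ ≤ 1 → 0 ≤ ⟪gradient f x, s⟫ := by
  rw [Xmeas, abs_sInf_eq_zero_iff]
  · simp only [Set.mem_ofPred_eq, forall_exists_index, and_imp]
    exact ⟨fun h s hs hs1 => h _ s hs hs1 rfl, fun h v s hs hs1 hv => hv ▸ h s hs hs1⟩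
  · refine bddBelow_of_subset_image_closedBall
      (φ := fun s => ⟪gradient f x, s⟫) (by fun_prop) ?_
    rintro _ ⟨s, -, hs1, rfl⟩
    exact ⟨s, by simpa using hs1, rfl⟩
  · exact ⟨0, by simpa using hx, by simp, by simp⟩

lemma psiMeas_eq_zero_iff (hx : x ∈ F) :
    psiMeas f F x = 0 ↔ ∀ d, x + d ∈ F → ‖d‖ ≤ 1 → ⟪gradient f x, d⟫ ≤ 0 →
      0 ≤ iteratedFDeriv ℝ 2 f x ![d, d] := by
  rw [psiMeas, abs_sInf_eq_zero_iff]
  · simp only [Set.mem_ofPred_eq, forall_exists_index, and_imp]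
    exact ⟨fun h d hd hd1 hg => h _ d hd hd1 hg rfl,
      fun h v d hd hd1 hg hv => hv ▸ h d hd hd1 hg⟩
  · refine bddBelow_of_subset_image_closedBall
      (φ := fun d => iteratedFDeriv ℝ 2 f x ![d, d]) (by fun_prop) ?_
    rintro _ ⟨d, -, hd1, -, rfl⟩
    exact ⟨d, by simpa using hd1, rfl⟩
  · exact ⟨0, by simpa using hx, by simp, by simp,
      ((iteratedFDeriv ℝ 2 f x).map_coord_zero (i := 0) rfl).symm⟩

end Measures

theorem stmt_3_general {n : ℕ} (f : EuclideanSpace ℝ (Fin n) → ℝ)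
    (F : Set (EuclideanSpace ℝ (Fin n)))
    (hFconv : Convex ℝ F) (xb : EuclideanSpace ℝ (Fin n)) (hxb : xb ∈ F) :
    (Xmeas f F xb = 0 ∧ psiMeas f F xb = 0) ↔
      ((∀ x ∈ F, 0 ≤ ⟪gradient f xb, x - xb⟫) ∧
        (∀ d : EuclideanSpace ℝ (Fin n), ⟪gradient f xb, d⟫ = 0 → xb + d ∈ F →
          0 ≤ iteratedFDeriv ℝ 2 f xb ![d, d])) := by
  set g := gradient f xb
  set A := iteratedFDeriv ℝ 2 f xb
  have first_order : Xmeas f F xb = 0 ↔ ∀ d, xb + d ∈ F → 0 ≤ ⟪g, d⟫ := by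
    rw [Xmeas_eq_zero_iff hxb, hFconv.forall_add_mem_of_norm_le_one_iff hxb]
    intro d t ht h
    rwa [real_inner_smul_right, mul_nonneg_iff_of_pos_left ht] at h
  have second_order : psiMeas f F xb = 0 ↔
      ∀ d, xb + d ∈ F → ⟪g, d⟫ ≤ 0 → 0 ≤ A ![d, d] := by
    rw [psiMeas_eq_zero_iff hxb, hFconv.forall_add_mem_of_norm_le_one_iff hxb]
    intro d t ht h hg
    have := h (by rw [real_inner_smul_right]; exact mul_nonpos_of_nonneg_of_nonpos ht.le hg)
    rwa [A.map_smul_smul_two, smul_eq_mul, mul_nonneg_iff_of_pos_left (mul_pos ht ht)] at this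
  have feasible : (∀ y ∈ F, 0 ≤ ⟪g, y - xb⟫) ↔ ∀ d, xb + d ∈ F → 0 ≤ ⟪g, d⟫ :=
    ⟨fun h d hd => by simpa using h _ hd, fun h y hy => h _ (by simpa using hy)⟩
  rw [first_order, second_order, feasible]
  refine and_congr_right fun hg => forall_congr' fun d => ?_
  exact ⟨fun h hgd hd => h hd hgd.le, fun h hd hgd => h (hgd.antisymm (hg d hd)) hd⟩

theorem stmt_3 {n : ℕ} (f : EuclideanSpace ℝ (Fin n) → ℝ) (hf : ContDiff ℝ 2 f)
    (F : Set (EuclideanSpace ℝ (Fin n))) (hFne : F.Nonempty) (hFcl : IsClosed F)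
    (hFconv : Convex ℝ F) (xb : EuclideanSpace ℝ (Fin n)) (hxb : xb ∈ F) :
    (Xmeas f F xb = 0 ∧ psiMeas f F xb = 0) ↔
      ((∀ x ∈ F, 0 ≤ ⟪gradient f xb, x - xb⟫) ∧
        (∀ d : EuclideanSpace ℝ (Fin n), ⟪gradient f xb, d⟫ = 0 → xb + d ∈ F →
          0 ≤ iteratedFDeriv ℝ 2 f xb ![d, d])) :=
  stmt_3_general f F hFconv xb hxb
end

section
/- Let G = (V, E) be a simple graph with |V| = n ≥ 1 vertices, let A_G be its adjacency matrix, let t be a positive integer with t ≤ n, let Q = (t − 1/2)(Iₙ + A_G) − 1ₙ (where Iₙ is the n×n identity matrix and 1ₙ is the n×n all-ones matrix), and let δ = 1/(2n+1). Then the following are equivalent: (i) there exists x ∈ ℝⁿ with x ≥ 0 componentwise and ‖x‖₂ ≤ 1 such that xᵀQx ≤ −δ/√n; (ii) G contains a stable (independent) set of size t. -/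
/-!
Write `q(x) = xᵀ(I + A_G)x`, so that `xᵀQx = (t - 1/2) q(x) - (∑ xᵢ)²`.

For `x ≥ 0` there is a stable set `S` with `(∑ xᵢ)² ≤ |S| q(x)` (a Motzkin–Straus type bound).
If two vertices `u v` of the support of `x` are adjacent, then `e_u - e_v` is isotropic for
`I + A_G`, so moving all of the mass of `v` onto whichever of `u, v` has the smaller value of
`(I + A_G)x` keeps `∑ xᵢ`, does not increase `q`, and shrinks the support. Once the support `S` is
stable, `q(x) = ∑ xᵢ²` and Cauchy–Schwarz gives the bound. If `|S| ≤ t - 1` this gives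
`xᵀQx ≥ q(x)/2 ≥ 0`, so `xᵀQx < 0` forces `|S| ≥ t`.

Conversely the uniform vector `1_S / t` on a stable `t`-set has norm `t^{-1/2} ≤ 1` and
`xᵀQx = -1/(2t)`, which is below `-δ/√n` because `2t < 2n + 1`.
-/

open Matrix Finset

section QuadraticForm

variable {V : Type*} [Fintype V]

lemma dotProduct_mulVec_add_smul {M : Matrix V V ℝ} (hM : M.IsSymm) (x d : V → ℝ) (c : ℝ) :
    (x + c • d) ⬝ᵥ M *ᵥ (x + c • d) =
      x ⬝ᵥ M *ᵥ x + 2 * c * (d ⬝ᵥ M *ᵥ x) + c ^ 2 * (d ⬝ᵥ M *ᵥ d) := by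
  have h : x ⬝ᵥ M *ᵥ d = d ⬝ᵥ M *ᵥ x := by
    rw [dotProduct_mulVec, ← mulVec_transpose, hM.eq, dotProduct_comm]
  simp only [mulVec_add, mulVec_smul, dotProduct_add, add_dotProduct, dotProduct_smul,
    smul_dotProduct, smul_eq_mul, h]
  ring

lemma dotProduct_smul_sub_of_one_mulVec (M : Matrix V V ℝ) (c : ℝ) (x : V → ℝ) :
    x ⬝ᵥ (c • M - of fun _ _ => 1) *ᵥ x = c * (x ⬝ᵥ M *ᵥ x) - (∑ i, x i) ^ 2 := by
  have h : (of fun _ _ => 1 : Matrix V V ℝ) *ᵥ x = fun _ => ∑ j, x j := by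
    funext i; simp [mulVec, dotProduct]
  rw [sub_mulVec, dotProduct_sub, smul_mulVec, dotProduct_smul, smul_eq_mul, h, sq]
  simp [dotProduct, sum_mul]

lemma sq_sum_le_card_support_mul_sum_sq (x : V → ℝ) :
    (∑ i, x i) ^ 2 ≤ #{i | x i ≠ 0} * ∑ i, x i ^ 2 := by
  calc (∑ i, x i) ^ 2 = (∑ i ∈ {i | x i ≠ 0}, x i) ^ 2 := by rw [sum_filter_ne_zero]
    _ ≤ #{i | x i ≠ 0} * ∑ i ∈ {i | x i ≠ 0}, x i ^ 2 := sq_sum_le_card_mul_sum_sq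
    _ = #{i | x i ≠ 0} * ∑ i, x i ^ 2 := by
      congr 1
      exact sum_subset (subset_univ _) (by aesop)

end QuadraticForm

namespace SimpleGraph

variable {V : Type*} [Fintype V] (G : SimpleGraph V) [DecidableRel G.Adj]

lemma dotProduct_adjMatrix_mulVec_nonneg {x : V → ℝ} (hx : 0 ≤ x) :
    0 ≤ x ⬝ᵥ G.adjMatrix ℝ *ᵥ x :=
  dotProduct_nonneg_of_nonneg hx fun i =>
    dotProduct_nonneg_of_nonneg (fun j => by by_cases h : G.Adj i j <;> simp [h]) hx

lemma dotProduct_adjMatrix_mulVec_eq_zero {x : V → ℝ} (hx : G.IsIndepSet (Function.support x)) :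
    x ⬝ᵥ G.adjMatrix ℝ *ᵥ x = 0 := by
  simp only [dotProduct, mulVec, mul_sum]
  refine sum_eq_zero fun i _ => sum_eq_zero fun j _ => ?_
  by_cases hij : G.Adj i j
  · by_cases hi : x i = 0
    · simp [hi]
    by_cases hj : x j = 0
    · simp [hj]
    exact absurd hij (hx hi hj hij.ne)
  · simp [hij]

variable [DecidableEq V]

lemma dotProduct_one_add_adjMatrix_mulVec (x : V → ℝ) :
    x ⬝ᵥ (1 + G.adjMatrix ℝ) *ᵥ x = ∑ i, x i ^ 2 + x ⬝ᵥ G.adjMatrix ℝ *ᵥ x := by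
  simp [add_mulVec, dotProduct, sq, mul_add, sum_add_distrib]

lemma dotProduct_one_add_adjMatrix_mulVec_nonneg {x : V → ℝ} (hx : 0 ≤ x) :
    0 ≤ x ⬝ᵥ (1 + G.adjMatrix ℝ) *ᵥ x := by
  rw [dotProduct_one_add_adjMatrix_mulVec]
  exact add_nonneg (sum_nonneg fun i _ => sq_nonneg _) (G.dotProduct_adjMatrix_mulVec_nonneg hx)

lemma dotProduct_mulVec_add_smul_single_sub_single_le {x : V → ℝ} {u v : V} (huv : G.Adj u v)
    (hle : ((1 + G.adjMatrix ℝ) *ᵥ x) u ≤ ((1 + G.adjMatrix ℝ) *ᵥ x) v) {c : ℝ} (hc : 0 ≤ c) :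
    (x + c • (Pi.single u 1 - Pi.single v 1)) ⬝ᵥ (1 + G.adjMatrix ℝ) *ᵥ
        (x + c • (Pi.single u 1 - Pi.single v 1)) ≤
      x ⬝ᵥ (1 + G.adjMatrix ℝ) *ᵥ x := by
  set M := 1 + G.adjMatrix ℝ
  set d : V → ℝ := Pi.single u 1 - Pi.single v 1
  have hd : ∀ w : V → ℝ, d ⬝ᵥ w = w u - w v := by
    simp [d, sub_dotProduct, single_dotProduct]
  have hdMd : d ⬝ᵥ M *ᵥ d = 0 := by
    simp [hd, d, M, mulVec_sub, one_apply, adjMatrix_apply, huv, huv.symm, huv.ne, huv.ne']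
  have hdMx : d ⬝ᵥ M *ᵥ x ≤ 0 := by
    rw [hd]; linarith
  rw [dotProduct_mulVec_add_smul (isSymm_one.add G.isSymm_adjMatrix), hdMd]
  nlinarith

lemma exists_le_of_not_isIndepSet_support {x : V → ℝ} (hx : 0 ≤ x)
    (hind : ¬ G.IsIndepSet (Function.support x)) :
    ∃ y : V → ℝ, 0 ≤ y ∧ ∑ i, y i = ∑ i, x i ∧
      y ⬝ᵥ (1 + G.adjMatrix ℝ) *ᵥ y ≤ x ⬝ᵥ (1 + G.adjMatrix ℝ) *ᵥ x ∧
      #{i | y i ≠ 0} < #{i | x i ≠ 0} := by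
  simp only [IsIndepSet, Set.Pairwise, not_forall, not_not] at hind
  obtain ⟨u, hu, v, hv, -, huv⟩ := hind
  wlog hle : ((1 + G.adjMatrix ℝ) *ᵥ x) u ≤ ((1 + G.adjMatrix ℝ) *ᵥ x) v generalizing u v
  · exact this v hv u hu huv.symm (le_of_not_ge hle)
  set y := x + x v • (Pi.single u 1 - Pi.single v 1 : V → ℝ)
  have hy : ∀ i, y i = if i = v then 0 else if i = u then x u + x v else x i := by
    intro i
    rcases eq_or_ne i v with rfl | hiv
    · simp [y, huv.ne']
    rcases eq_or_ne i u with rfl | hiu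
    · simp [y, hiv]
    · simp [y, hiu, hiv]
  refine ⟨y, fun i => ?_, ?_, G.dotProduct_mulVec_add_smul_single_sub_single_le huv hle (hx v), ?_⟩
  · rw [hy]
    split_ifs
    exacts [le_rfl, add_nonneg (hx u) (hx v), hx i]
  · simp [y, sum_add_distrib, ← mul_sum, sum_sub_distrib]
  · have hv' : v ∈ ({i | x i ≠ 0} : Finset V) := by simpa using hv
    refine (card_le_card fun i hi => ?_).trans_lt (card_erase_lt_of_mem hv')
    simp only [mem_filter, mem_univ, true_and, hy, mem_erase] at hi ⊢
    split_ifs at hi with hiv hiu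
    · exact absurd rfl hi
    · exact ⟨hiv, hiu ▸ hu⟩
    · exact ⟨hiv, hi⟩

lemma exists_isIndepSet_support_le {x : V → ℝ} (hx : 0 ≤ x) :
    ∃ y : V → ℝ, 0 ≤ y ∧ ∑ i, y i = ∑ i, x i ∧
      y ⬝ᵥ (1 + G.adjMatrix ℝ) *ᵥ y ≤ x ⬝ᵥ (1 + G.adjMatrix ℝ) *ᵥ x ∧
      G.IsIndepSet (Function.support y) := by
  induction h : #{i | x i ≠ 0} using Nat.strong_induction_on generalizing x with
  | _ k ih =>
    by_cases hind : G.IsIndepSet (Function.support x)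
    · exact ⟨x, hx, rfl, le_rfl, hind⟩
    obtain ⟨y, hy, hsum, hle, hcard⟩ := G.exists_le_of_not_isIndepSet_support hx hind
    obtain ⟨z, hz, hzsum, hzle, hzind⟩ := ih _ (h ▸ hcard) hy rfl
    exact ⟨z, hz, hzsum.trans hsum, hzle.trans hle, hzind⟩

theorem exists_isIndepSet_sq_sum_le_card_mul {x : V → ℝ} (hx : 0 ≤ x) :
    ∃ S : Finset V, G.IsIndepSet S ∧
      (∑ i, x i) ^ 2 ≤ #S * (x ⬝ᵥ (1 + G.adjMatrix ℝ) *ᵥ x) := by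
  obtain ⟨y, hy, hsum, hle, hind⟩ := G.exists_isIndepSet_support_le hx
  refine ⟨({i | y i ≠ 0} : Finset V), by simpa [Function.support] using hind, ?_⟩
  calc (∑ i, x i) ^ 2 = (∑ i, y i) ^ 2 := by rw [hsum]
    _ ≤ #{i | y i ≠ 0} * ∑ i, y i ^ 2 := sq_sum_le_card_support_mul_sum_sq y
    _ = #{i | y i ≠ 0} * (y ⬝ᵥ (1 + G.adjMatrix ℝ) *ᵥ y) := by
      rw [dotProduct_one_add_adjMatrix_mulVec, G.dotProduct_adjMatrix_mulVec_eq_zero hind,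
        add_zero]
    _ ≤ #{i | y i ≠ 0} * (x ⬝ᵥ (1 + G.adjMatrix ℝ) *ᵥ x) := by gcongr

theorem exists_isNIndepSet_of_mul_dotProduct_sub_sq_sum_neg {t : ℕ} {x : V → ℝ} (hx : 0 ≤ x)
    (hneg : (t - 1 / 2) * (x ⬝ᵥ (1 + G.adjMatrix ℝ) *ᵥ x) - (∑ i, x i) ^ 2 < 0) :
    ∃ S : Finset V, G.IsNIndepSet t S := by
  obtain ⟨S, hS, hxS⟩ := G.exists_isIndepSet_sq_sum_le_card_mul hx
  have htS : t ≤ #S := by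
    by_contra! hlt
    have hSt : (#S : ℝ) ≤ t - 1 := by
      rw [le_sub_iff_add_le]; exact_mod_cast hlt
    have hq := G.dotProduct_one_add_adjMatrix_mulVec_nonneg hx
    nlinarith [mul_le_mul_of_nonneg_right hSt hq]
  obtain ⟨T, hTS, hT⟩ := exists_subset_card_eq htS
  exact ⟨T, hS.mono (coe_subset.mpr hTS), hT⟩

lemma exists_mul_dotProduct_sub_sq_sum_eq_of_isNIndepSet {t : ℕ} {S : Finset V}
    (hS : G.IsNIndepSet t S) (ht : 0 < t) :
    ∃ x : V → ℝ, 0 ≤ x ∧ ∑ i, x i ^ 2 = (t : ℝ)⁻¹ ∧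
      (t - 1 / 2) * (x ⬝ᵥ (1 + G.adjMatrix ℝ) *ᵥ x) - (∑ i, x i) ^ 2 = -(2 * t : ℝ)⁻¹ := by
  set x : V → ℝ := fun i => if i ∈ S then (t : ℝ)⁻¹ else 0
  have hsupp : Function.support x ⊆ S := fun i hi => by_contra fun h => hi (if_neg h)
  have htR : (t : ℝ) ≠ 0 := by exact_mod_cast ht.ne'
  have hsq : ∑ i, x i ^ 2 = (t : ℝ)⁻¹ := by
    simp only [x, ite_pow, inv_pow, ne_eq, OfNat.ofNat_ne_zero, not_false_eq_true, zero_pow,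
      sum_ite_mem, univ_inter, sum_const, hS.card_eq, nsmul_eq_mul]
    field_simp
  have hsum : ∑ i, x i = 1 := by simp [x, sum_ite_mem, hS.card_eq, htR]
  refine ⟨x, fun i => by positivity, hsq, ?_⟩
  rw [dotProduct_one_add_adjMatrix_mulVec,
    G.dotProduct_adjMatrix_mulVec_eq_zero (hS.isIndepSet.mono hsupp), add_zero, hsq, hsum]
  field_simp
  ring

end SimpleGraph

theorem stmt_4_general {n : ℕ} (G : SimpleGraph (Fin n)) [DecidableRel G.Adj]
    (t : ℕ) (ht : 1 ≤ t) (htn : t ≤ n)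
    (Q : Matrix (Fin n) (Fin n) ℝ)
    (hQ : Q = ((t : ℝ) - 1 / 2) • (1 + G.adjMatrix ℝ) - Matrix.of (fun _ _ => (1 : ℝ)))
    (δ : ℝ) (hδ : δ = 1 / (2 * (n : ℝ) + 1)) :
    (∃ x : Fin n → ℝ, (∀ i, 0 ≤ x i) ∧ Real.sqrt (∑ i, x i ^ 2) ≤ 1 ∧
        x ⬝ᵥ Q.mulVec x ≤ -δ / Real.sqrt n) ↔
      ∃ S : Finset (Fin n), S.card = t ∧ ∀ i ∈ S, ∀ j ∈ S, ¬ G.Adj i j := by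
  subst hQ hδ
  have hsqrt : 1 ≤ Real.sqrt n := Real.one_le_sqrt.mpr (by exact_mod_cast ht.trans htn)
  have hδ : 0 < 1 / (2 * (n : ℝ) + 1) / Real.sqrt n :=
    div_pos (by positivity) (one_pos.trans_le hsqrt)
  simp_rw [dotProduct_smul_sub_of_one_mulVec, neg_div]
  constructor
  · rintro ⟨x, hx, -, hxQ⟩
    obtain ⟨S, hS, hSt⟩ :=
      G.exists_isNIndepSet_of_mul_dotProduct_sub_sq_sum_neg hx (hxQ.trans_lt (neg_lt_zero.mpr hδ))
    exact ⟨S, hSt, fun i hi j hj hij => hS hi hj hij.ne hij⟩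
  · rintro ⟨S, hSt, hS⟩
    obtain ⟨x, hx, hsq, hval⟩ := G.exists_mul_dotProduct_sub_sq_sum_eq_of_isNIndepSet
      ⟨fun i hi j hj _ => hS i hi j hj, hSt⟩ ht
    refine ⟨x, hx, Real.sqrt_le_one.mpr (hsq ▸ inv_le_one_of_one_le₀ (by exact_mod_cast ht)), ?_⟩
    have htn' : (2 * t : ℝ) ≤ 2 * n + 1 := by linarith [(Nat.cast_le (α := ℝ)).mpr htn]
    calc _ = -(2 * t : ℝ)⁻¹ := hval
      _ ≤ -(1 / (2 * n + 1)) := by rw [← one_div]; gcongr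
      _ ≤ -(1 / (2 * n + 1) / Real.sqrt n) := neg_le_neg (div_le_self (by positivity) hsqrt)

theorem stmt_4 {n : ℕ} (hn : 1 ≤ n) (G : SimpleGraph (Fin n)) [DecidableRel G.Adj]
    (t : ℕ) (ht : 1 ≤ t) (htn : t ≤ n)
    (Q : Matrix (Fin n) (Fin n) ℝ)
    (hQ : Q = ((t : ℝ) - 1 / 2) • (1 + G.adjMatrix ℝ) - Matrix.of (fun _ _ => (1 : ℝ)))
    (δ : ℝ) (hδ : δ = 1 / (2 * (n : ℝ) + 1)) :
    (∃ x : Fin n → ℝ, (∀ i, 0 ≤ x i) ∧ Real.sqrt (∑ i, x i ^ 2) ≤ 1 ∧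
        x ⬝ᵥ Q.mulVec x ≤ -δ / Real.sqrt n) ↔
      ∃ S : Finset (Fin n), S.card = t ∧ ∀ i ∈ S, ∀ j ∈ S, ¬ G.Adj i j :=
  stmt_4_general G t ht htn Q hQ δ hδ
end

section
/- Let f : ℝⁿ → ℝ be twice differentiable with ρ-Lipschitz continuous Hessian, and let ρ̃ ≥ ρ with ρ̃ > 0. Let x ∈ ℝⁿ, and let d ∈ ℝⁿ and ψ ≥ 0 satisfy ‖d‖ ≤ 1, ⟨∇f(x), d⟩ ≤ 0, and dᵀ∇²f(x)d = −ψ. Then f(x + (2ψ/ρ̃) d) ≤ f(x) − 2ψ³/(3ρ̃²). -/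
open scoped RealInnerProductSpace
open Set

/-!
Along the segment `t ↦ x + t • h`, the Lipschitz bound on the Hessian gives
`φ'' t ≤ φ'' 0 + ρ ‖h‖³ t`; integrating twice yields the cubic upper model
`f (x + h) ≤ f x + Df(x) h + ½ D²f(x)[h, h] + ρ/6 ‖h‖³`.
For `h = t • d` the linear term is `≤ 0` and the model is `f x - ψ t² / 2 + ρ̃ t³ / 6`,
which is minimised at `t = 2ψ / ρ̃` with value `f x - 2ψ³ / (3ρ̃²)`.
-/

theorem le_of_hasDerivAt_le {u v u' v' : ℝ → ℝ} {T : ℝ} (hT : 0 ≤ T)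
    (hu : ∀ t, HasDerivAt u (u' t) t) (hv : ∀ t, HasDerivAt v (v' t) t)
    (h₀ : u 0 ≤ v 0) (h' : ∀ t ∈ Ico 0 T, u' t ≤ v' t) : u T ≤ v T :=
  image_le_of_deriv_right_le_deriv_boundary
    (fun t _ ↦ (hu t).continuousAt.continuousWithinAt) (fun t _ ↦ (hu t).hasDerivWithinAt) h₀
    (fun t _ ↦ (hv t).continuousAt.continuousWithinAt) (fun t _ ↦ (hv t).hasDerivWithinAt) h'
    (right_mem_Icc.2 hT)

theorem le_taylor_two_add_cubic {φ φ' φ'' : ℝ → ℝ} {M T : ℝ} (hT : 0 ≤ T)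
    (hφ : ∀ t, HasDerivAt φ (φ' t) t) (hφ' : ∀ t, HasDerivAt φ' (φ'' t) t)
    (hbound : ∀ t ∈ Ico 0 T, φ'' t ≤ φ'' 0 + M * t) :
    φ T ≤ φ 0 + T * φ' 0 + T ^ 2 / 2 * φ'' 0 + M * T ^ 3 / 6 := by
  have hquad : ∀ t, HasDerivAt (fun s ↦ φ' 0 + s * φ'' 0 + M * s ^ 2 / 2)
      (φ'' 0 + M * t) t := fun t ↦ by
    refine ((((hasDerivAt_id t).mul_const (φ'' 0)).const_add (φ' 0)).add
      (((hasDerivAt_pow 2 t).const_mul M).div_const 2)).congr_deriv ?_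
    push_cast; ring
  have hcubic : ∀ t, HasDerivAt (fun s ↦ φ 0 + s * φ' 0 + s ^ 2 / 2 * φ'' 0 + M * s ^ 3 / 6)
      (φ' 0 + t * φ'' 0 + M * t ^ 2 / 2) t := fun t ↦ by
    refine (((((hasDerivAt_id t).mul_const (φ' 0)).const_add (φ 0)).add
      (((hasDerivAt_pow 2 t).div_const 2).mul_const (φ'' 0))).add
      (((hasDerivAt_pow 3 t).const_mul M).div_const 6)).congr_deriv ?_
    push_cast; ring
  have hφ'_le : ∀ s ∈ Ico 0 T, φ' s ≤ φ' 0 + s * φ'' 0 + M * s ^ 2 / 2 := fun s hs ↦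
    le_of_hasDerivAt_le hs.1 hφ' hquad (by simp)
      fun t ht ↦ hbound t ⟨ht.1, ht.2.trans hs.2⟩
  exact le_of_hasDerivAt_le hT hφ hcubic (by simp) hφ'_le

section CubicModel

variable {E F : Type*} [NormedAddCommGroup E] [NormedSpace ℝ E]
  [NormedAddCommGroup F] [NormedSpace ℝ F]

theorem hasDerivAt_comp_add_smul {g : E → F} (hg : Differentiable ℝ g) (x h : E) (t : ℝ) :
    HasDerivAt (fun s : ℝ ↦ g (x + s • h)) (fderiv ℝ g (x + t • h) h) t := by
  have hline : HasDerivAt (fun s : ℝ ↦ x + s • h) h t := by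
    simpa using ((hasDerivAt_id t).smul_const h).const_add x
  exact (hg _).hasFDerivAt.comp_hasDerivAt t hline

theorem norm_apply_two_le (A : ContinuousMultilinearMap ℝ (fun _ : Fin 2 ↦ E) ℝ) (h : E) :
    ‖A ![h, h]‖ ≤ ‖A‖ * ‖h‖ ^ 2 := by
  simpa [Fin.prod_univ_two, sq] using A.le_opNorm ![h, h]

theorem le_add_fderiv_add_iteratedFDeriv_two_add_cubic {f : E → ℝ} (hf : ContDiff ℝ 2 f)
    {ρ : ℝ} (hLip : ∀ u v : E, ‖iteratedFDeriv ℝ 2 f u - iteratedFDeriv ℝ 2 f v‖ ≤ ρ * ‖u - v‖)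
    (x h : E) :
    f (x + h) ≤ f x + fderiv ℝ f x h + iteratedFDeriv ℝ 2 f x ![h, h] / 2 + ρ / 6 * ‖h‖ ^ 3 := by
  set D2 : ℝ → ℝ := fun t ↦ iteratedFDeriv ℝ 2 f (x + t • h) ![h, h]
  have hφ : ∀ t, HasDerivAt (fun s : ℝ ↦ f (x + s • h)) (fderiv ℝ f (x + t • h) h) t :=
    hasDerivAt_comp_add_smul (hf.differentiable (by norm_num)) x h
  have hφ' : ∀ t, HasDerivAt (fun s : ℝ ↦ fderiv ℝ f (x + s • h) h) (D2 t) t := fun t ↦ by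
    have hDf := hasDerivAt_comp_add_smul
      ((hf.fderiv_right (m := 1) (by norm_num)).differentiable (by norm_num)) x h t
    simpa [D2, iteratedFDeriv_two_apply] using hDf.clm_apply (hasDerivAt_const t h)
  have hbound : ∀ t ∈ Ico (0 : ℝ) 1, D2 t ≤ D2 0 + ρ * ‖h‖ ^ 3 * t := fun t ht ↦ by
    have hdiff := norm_apply_two_le
      (iteratedFDeriv ℝ 2 f (x + t • h) - iteratedFDeriv ℝ 2 f x) h
    have hLip_t : ‖iteratedFDeriv ℝ 2 f (x + t • h) - iteratedFDeriv ℝ 2 f x‖ ≤ ρ * (t * ‖h‖) := by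
      simpa [norm_smul, abs_of_nonneg ht.1] using hLip (x + t • h) x
    have hD2 : D2 t - D2 0 ≤ ρ * (t * ‖h‖) * ‖h‖ ^ 2 := by
      simp only [D2, zero_smul, add_zero]
      exact (le_abs_self _).trans (hdiff.trans (by gcongr))
    linarith
  calc f (x + h) ≤ f x + 1 * fderiv ℝ f x h + 1 ^ 2 / 2 * D2 0 + ρ * ‖h‖ ^ 3 * 1 ^ 3 / 6 := by
        simpa using le_taylor_two_add_cubic zero_le_one hφ hφ' hbound
    _ = _ := by simp only [D2, zero_smul, add_zero]; ring

end CubicModel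

theorem le_sub_of_negative_curvature {E : Type*} [NormedAddCommGroup E] [InnerProductSpace ℝ E]
    [CompleteSpace E] {f : E → ℝ} (hf : ContDiff ℝ 2 f) {ρ ρt : ℝ}
    (hLip : ∀ u v : E, ‖iteratedFDeriv ℝ 2 f u - iteratedFDeriv ℝ 2 f v‖ ≤ ρ * ‖u - v‖)
    (hρρt : ρ ≤ ρt) (hρt : 0 ≤ ρt) {x d : E} (hd : ‖d‖ ≤ 1) {ψ : ℝ}
    (hdir : ⟪gradient f x, d⟫ ≤ 0) (hquad : iteratedFDeriv ℝ 2 f x ![d, d] = -ψ)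
    {t : ℝ} (ht : 0 ≤ t) :
    f (x + t • d) ≤ f x - ψ * t ^ 2 / 2 + ρt * t ^ 3 / 6 := by
  have hmodel := le_add_fderiv_add_iteratedFDeriv_two_add_cubic hf hLip x (t • d)
  have hlin : fderiv ℝ f x (t • d) ≤ 0 := by
    rw [map_smul, smul_eq_mul, ← inner_gradient_left]
    exact mul_nonpos_of_nonneg_of_nonpos ht hdir
  have hcurv : iteratedFDeriv ℝ 2 f x ![t • d, t • d] = -ψ * t ^ 2 := by
    have hsmul : ![t • d, t • d] = fun i ↦ t • ![d, d] i := by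
      funext i; fin_cases i <;> rfl
    rw [hsmul, ContinuousMultilinearMap.map_smul_univ, hquad]
    simp [sq, mul_comm]
  have hnorm : ‖t • d‖ ≤ t := by
    rw [norm_smul, Real.norm_of_nonneg ht]
    exact mul_le_of_le_one_right ht hd
  have hcubic : ρ / 6 * ‖t • d‖ ^ 3 ≤ ρt * t ^ 3 / 6 := by
    calc ρ / 6 * ‖t • d‖ ^ 3 ≤ ρt / 6 * ‖t • d‖ ^ 3 := by gcongr
      _ ≤ ρt / 6 * t ^ 3 := by gcongr
      _ = ρt * t ^ 3 / 6 := by ring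
  rw [hcurv] at hmodel
  linarith

theorem stmt_12 {n : ℕ} (f : EuclideanSpace ℝ (Fin n) → ℝ) (hf : ContDiff ℝ 2 f)
    (ρ ρt : ℝ)
    (hLip : ∀ u v : EuclideanSpace ℝ (Fin n),
      ‖iteratedFDeriv ℝ 2 f u - iteratedFDeriv ℝ 2 f v‖ ≤ ρ * ‖u - v‖)
    (hρρt : ρ ≤ ρt) (hρt : 0 < ρt)
    (x d : EuclideanSpace ℝ (Fin n)) (hd : ‖d‖ ≤ 1)
    (ψ : ℝ) (hψ : 0 ≤ ψ) (hdir : ⟪gradient f x, d⟫ ≤ 0)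
    (hquad : iteratedFDeriv ℝ 2 f x ![d, d] = -ψ) :
    f (x + (2 * ψ / ρt) • d) ≤ f x - 2 * ψ ^ 3 / (3 * ρt ^ 2) := by
  have hstep := le_sub_of_negative_curvature hf hLip hρρt hρt.le hd hdir hquad
    (t := 2 * ψ / ρt) (by positivity)
  have hvalue : f x - ψ * (2 * ψ / ρt) ^ 2 / 2 + ρt * (2 * ψ / ρt) ^ 3 / 6
      = f x - 2 * ψ ^ 3 / (3 * ρt ^ 2) := by
    field_simp; ring
  rwa [hvalue] at hstep
end

section
/- Let f : ℝⁿ → ℝ be twice continuously differentiable and bounded below by f_min on a nonempty closed convex set F ⊆ ℝⁿ, let L̃, ρ̃ > 0, let ε_g > 0, and let (x_k)_{k≥0} be a sequence in F that satisfies, for every k, f(x_{k+1}) ≤ f(x_k) − max{ X(x_k)²/(2L̃), 2ψ(x_k)³/(3ρ̃²) }. Then the set G(ε_g) = { k ∈ ℕ : X(x_k) > ε_g } is finite and |G(ε_g)| ≤ 2L̃ (f(x₀) − f_min)/ε_g². -/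
open scoped RealInnerProductSpace

/-!
Each iteration with `X(x_k) > ε_g` lowers `f` by at least `ε_g² / (2 L̃)`, and no iteration
raises it. Hence after `N` steps `f(x_N) ≤ f(x₀) - #{k < N | X(x_k) > ε_g} · ε_g² / (2 L̃)`, and the
lower bound `f_min` caps these counts uniformly in `N`.
-/

namespace Nat

variable {p : ℕ → Prop} [DecidablePred p]

theorem card_le_count_sup_succ {S : Finset ℕ} (hS : ∀ k ∈ S, p k) :
    S.card ≤ count p (S.sup id + 1) := by
  rw [count_eq_card_filter_range]
  refine Finset.card_le_card fun k hk => Finset.mem_filter.2 ⟨?_, hS k hk⟩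
  exact Finset.mem_range.2 (Nat.lt_succ_of_le (Finset.le_sup (f := id) hk))

theorem setOf_finite_and_ncard_le_of_count_le {B : ℝ} (hB : ∀ N, (count p N : ℝ) ≤ B) :
    {k | p k}.Finite ∧ ({k | p k}.ncard : ℝ) ≤ B := by
  have hfin : {k | p k}.Finite := by
    by_contra hinf
    have hcount := hB (nth p (⌈B⌉₊ + 1))
    rw [count_nth_of_infinite hinf] at hcount
    push_cast at hcount
    linarith [le_ceil B]
  refine ⟨hfin, ?_⟩
  rw [Set.ncard_eq_toFinset_card _ hfin]
  refine le_trans ?_ (hB (hfin.toFinset.sup id + 1))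
  exact_mod_cast card_le_count_sup_succ fun k hk => hfin.mem_toFinset.1 hk

theorem count_mul_le_sub {u : ℕ → ℝ} {c : ℝ} (hle : ∀ k, u (k + 1) ≤ u k)
    (hdec : ∀ k, p k → u (k + 1) ≤ u k - c) (N : ℕ) :
    (count p N : ℝ) * c ≤ u 0 - u N := by
  induction N with
  | zero => simp
  | succ N ih =>
    rw [count_succ]
    split_ifs with hN
    · push_cast
      linarith [hdec N hN]
    · simpa using ih.trans (by linarith [hle N])

end Nat

theorem setOf_finite_and_ncard_le_of_sufficient_decrease {p : ℕ → Prop} {u : ℕ → ℝ}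
    {c m : ℝ} (hc : 0 < c) (hle : ∀ k, u (k + 1) ≤ u k) (hdec : ∀ k, p k → u (k + 1) ≤ u k - c)
    (hm : ∀ k, m ≤ u k) :
    {k | p k}.Finite ∧ ({k | p k}.ncard : ℝ) ≤ (u 0 - m) / c := by
  classical
  refine Nat.setOf_finite_and_ncard_le_of_count_le fun N => ?_
  rw [le_div_iff₀ hc]
  linarith [Nat.count_mul_le_sub hle hdec N, hm N]

theorem stmt_16_general {n : ℕ} (f : EuclideanSpace ℝ (Fin n) → ℝ)
    (F : Set (EuclideanSpace ℝ (Fin n))) (fmin : ℝ) (hbdd : ∀ y ∈ F, fmin ≤ f y)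
    (Lt ρt : ℝ) (hLt : 0 < Lt)
    (x : ℕ → EuclideanSpace ℝ (Fin n)) (hxF : ∀ k, x k ∈ F)
    (hdec : ∀ k, f (x (k + 1)) ≤ f (x k) -
      max (Xmeas f F (x k) ^ 2 / (2 * Lt)) (2 * psiMeas f F (x k) ^ 3 / (3 * ρt ^ 2))) (εg : ℝ) (hεg : 0 < εg) :
    {k : ℕ | εg < Xmeas f F (x k)}.Finite ∧
      ({k : ℕ | εg < Xmeas f F (x k)}.ncard : ℝ) ≤ 2 * Lt * (f (x 0) - fmin) / εg ^ 2 := by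
  have hfirst : ∀ k, f (x (k + 1)) ≤ f (x k) - Xmeas f F (x k) ^ 2 / (2 * Lt) :=
    fun k => (hdec k).trans (sub_le_sub_left (le_max_left _ _) _)
  have hle : ∀ k, f (x (k + 1)) ≤ f (x k) := fun k =>
    (hfirst k).trans (sub_le_self _ (by positivity))
  have hsuff : ∀ k, εg < Xmeas f F (x k) → f (x (k + 1)) ≤ f (x k) - εg ^ 2 / (2 * Lt) := by
    intro k hk
    have hsq : εg ^ 2 ≤ Xmeas f F (x k) ^ 2 := pow_le_pow_left₀ hεg.le hk.le 2
    linarith [hfirst k, div_le_div_of_nonneg_right hsq (by positivity : (0 : ℝ) ≤ 2 * Lt)]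
  have h := setOf_finite_and_ncard_le_of_sufficient_decrease (by positivity) hle hsuff
    fun k => hbdd _ (hxF k)
  rwa [div_div_eq_mul_div, mul_comm] at h

theorem stmt_16 {n : ℕ} (f : EuclideanSpace ℝ (Fin n) → ℝ) (hf : ContDiff ℝ 2 f)
    (F : Set (EuclideanSpace ℝ (Fin n))) (hFne : F.Nonempty) (hFcl : IsClosed F)
    (hFconv : Convex ℝ F) (fmin : ℝ) (hbdd : ∀ y ∈ F, fmin ≤ f y)
    (Lt ρt : ℝ) (hLt : 0 < Lt) (hρt : 0 < ρt)
    (x : ℕ → EuclideanSpace ℝ (Fin n)) (hxF : ∀ k, x k ∈ F)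
    (hdec : ∀ k, f (x (k + 1)) ≤ f (x k) -
      max (Xmeas f F (x k) ^ 2 / (2 * Lt)) (2 * psiMeas f F (x k) ^ 3 / (3 * ρt ^ 2))) (εg : ℝ) (hεg : 0 < εg) :
    {k : ℕ | εg < Xmeas f F (x k)}.Finite ∧
      ({k : ℕ | εg < Xmeas f F (x k)}.ncard : ℝ) ≤ 2 * Lt * (f (x 0) - fmin) / εg ^ 2 :=
  stmt_16_general f F fmin hbdd Lt ρt hLt x hxF hdec εg hεg
end

section
/- Let f : ℝⁿ → ℝ be twice continuously differentiable and bounded below by f_min on a nonempty closed convex set F ⊆ ℝⁿ, let L̃, ρ̃ > 0, let ε_g, ε_H > 0, and let (x_k)_{k≥0} be a sequence in F that satisfies, for every k, f(x_{k+1}) ≤ f(x_k) − max{ X(x_k)²/(2L̃), 2ψ(x_k)³/(3ρ̃²) }. Then the set G(ε_g) ∪ H(ε_H), where G(ε_g) = { k : X(x_k) > ε_g } and H(ε_H) = { k : ψ(x_k) > ε_H }, is finite with cardinality at most (f(x₀) − f_min) / min{ ε_g²/(2L̃), 2ε_H³/(3ρ̃²) }. -/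
/-!
The guaranteed decreases `d k = max {X(x_k)²/(2L̃), 2ψ(x_k)³/(3ρ̃²)}` telescope: their partial sums are bounded by
`f(x₀) - f_min`, so `∑ d k` converges. Every index in `G(ε_g) ∪ H(ε_H)` contributes at least
`c = min {ε_g²/(2L̃), 2ε_H³/(3ρ̃²)}` to this sum, hence there are at most `(f(x₀) - f_min) / c`
such indices.
-/

open scoped RealInnerProductSpace

section Descent

open Finset

variable {a d : ℕ → ℝ} {m : ℝ}

theorem sum_range_le_of_descent (hbdd : ∀ k, m ≤ a k) (hdec : ∀ k, a (k + 1) ≤ a k - d k)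
    (N : ℕ) : ∑ k ∈ range N, d k ≤ a 0 - m :=
  calc ∑ k ∈ range N, d k ≤ ∑ k ∈ range N, (a k - a (k + 1)) :=
        sum_le_sum fun k _ => by linarith [hdec k]
    _ = a 0 - a N := sum_range_sub' a N
    _ ≤ a 0 - m := by linarith [hbdd N]

theorem finite_and_ncard_le_of_descent (hbdd : ∀ k, m ≤ a k)
    (hdec : ∀ k, a (k + 1) ≤ a k - d k) (hd : ∀ k, 0 ≤ d k) {S : Set ℕ} {c : ℝ} (hc : 0 < c)
    (hS : ∀ k ∈ S, c ≤ d k) : S.Finite ∧ (S.ncard : ℝ) ≤ (a 0 - m) / c := by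
  have hsum := sum_range_le_of_descent hbdd hdec
  have hsummable : Summable d := summable_of_sum_range_le hd hsum
  have hfin : S.Finite :=
    (Filter.eventually_cofinite.1 (hsummable.tendsto_cofinite_zero.eventually (gt_mem_nhds hc))).subset
      fun k hk => not_lt.2 (hS k hk)
  refine ⟨hfin, (le_div_iff₀ hc).2 ?_⟩
  calc (S.ncard : ℝ) * c = ∑ _k ∈ hfin.toFinset, c := by
        rw [Set.ncard_eq_toFinset_card S hfin, sum_const, nsmul_eq_mul]
    _ ≤ ∑ k ∈ hfin.toFinset, d k := sum_le_sum fun k hk => hS k (hfin.mem_toFinset.1 hk)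
    _ ≤ ∑' k, d k := hsummable.sum_le_tsum _ fun k _ => hd k
    _ ≤ a 0 - m := Real.tsum_le_of_sum_range_le hd hsum

end Descent

theorem stmt_17_general {n : ℕ} (f : EuclideanSpace ℝ (Fin n) → ℝ)
    (F : Set (EuclideanSpace ℝ (Fin n))) (fmin : ℝ) (hbdd : ∀ y ∈ F, fmin ≤ f y)
    (Lt ρt : ℝ) (hLt : 0 < Lt) (hρt : 0 < ρt)
    (x : ℕ → EuclideanSpace ℝ (Fin n)) (hxF : ∀ k, x k ∈ F)
    (hdec : ∀ k, f (x (k + 1)) ≤ f (x k) -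
      max (Xmeas f F (x k) ^ 2 / (2 * Lt)) (2 * psiMeas f F (x k) ^ 3 / (3 * ρt ^ 2))) (εg εH : ℝ) (hεg : 0 < εg) (hεH : 0 < εH) :
    ({k : ℕ | εg < Xmeas f F (x k)} ∪ {k : ℕ | εH < psiMeas f F (x k)}).Finite ∧
      (({k : ℕ | εg < Xmeas f F (x k)} ∪ {k : ℕ | εH < psiMeas f F (x k)}).ncard : ℝ) ≤
        (f (x 0) - fmin) / min (εg ^ 2 / (2 * Lt)) (2 * εH ^ 3 / (3 * ρt ^ 2)) := by
  refine finite_and_ncard_le_of_descent (a := fun k => f (x k)) (fun k => hbdd _ (hxF k)) hdec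
    (fun k => le_max_of_le_left (by positivity)) (by positivity) ?_
  rintro k (hk | hk)
  · exact (min_le_left _ _).trans (le_max_of_le_left (by gcongr; exact hk.le))
  · exact (min_le_right _ _).trans (le_max_of_le_right (by gcongr; exact hk.le))

theorem stmt_17 {n : ℕ} (f : EuclideanSpace ℝ (Fin n) → ℝ) (hf : ContDiff ℝ 2 f)
    (F : Set (EuclideanSpace ℝ (Fin n))) (hFne : F.Nonempty) (hFcl : IsClosed F)
    (hFconv : Convex ℝ F) (fmin : ℝ) (hbdd : ∀ y ∈ F, fmin ≤ f y)
    (Lt ρt : ℝ) (hLt : 0 < Lt) (hρt : 0 < ρt)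
    (x : ℕ → EuclideanSpace ℝ (Fin n)) (hxF : ∀ k, x k ∈ F)
    (hdec : ∀ k, f (x (k + 1)) ≤ f (x k) -
      max (Xmeas f F (x k) ^ 2 / (2 * Lt)) (2 * psiMeas f F (x k) ^ 3 / (3 * ρt ^ 2))) (εg εH : ℝ) (hεg : 0 < εg) (hεH : 0 < εH) :
    ({k : ℕ | εg < Xmeas f F (x k)} ∪ {k : ℕ | εH < psiMeas f F (x k)}).Finite ∧
      (({k : ℕ | εg < Xmeas f F (x k)} ∪ {k : ℕ | εH < psiMeas f F (x k)}).ncard : ℝ) ≤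
        (f (x 0) - fmin) / min (εg ^ 2 / (2 * Lt)) (2 * εH ^ 3 / (3 * ρt ^ 2)) :=
  stmt_17_general f F fmin hbdd Lt ρt hLt hρt x hxF hdec εg εH hεg hεH
end
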